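/- (Coercivity estimate) Under H(l), for every ε > 0 there exists c(ε) > 0 such that ⟨L u, u⟩ ≥ −b|Γ₃|^{1/p}‖a_l‖_{L^{p'}(Γ₃)} − b_l b |Γ₃| − ε‖u‖_{L^p(Γ₃)}^p − c(ε) for all u ∈ L^p(Γ₃). -/

import Mathlib

open MeasureTheory

/-!
Since `s ↦ l x s` is monotone and vanishes at `b > 0`, `l x s * (s - b) ≥ 0`; hence
`l x s * s ≥ b * l x 0` for every `s` (split at `s = 0`). The growth bound at `s = 0` gives
`|l x 0| ≤ a_l x + b_l`, so `l x (u x) * u x ≥ -b (a_l x + b_l)`, and integrating with Hölder's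
inequality `∫ a_l ≤ |Γ₃|^{1/p} ‖a_l‖_{p'}` yields the estimate even without the `ε`-term.
-/

theorem Monotone.mul_sub_nonneg_of_eq_zero {φ : ℝ → ℝ} (hφ : Monotone φ) {b : ℝ} (hb : φ b = 0)
    (s : ℝ) : 0 ≤ φ s * (s - b) := by
  rcases le_total s b with hsb | hbs
  · exact mul_nonneg_of_nonpos_of_nonpos ((hφ hsb).trans_eq hb) (sub_nonpos.2 hsb)
  · exact mul_nonneg (hb.symm.trans_le (hφ hbs)) (sub_nonneg.2 hbs)

theorem Monotone.mul_apply_zero_le_apply_mul_self {φ : ℝ → ℝ} (hφ : Monotone φ) {b : ℝ}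
    (hb : φ b = 0) (hb0 : 0 ≤ b) (s : ℝ) : b * φ 0 ≤ φ s * s := by
  have hφ0 : φ 0 ≤ 0 := (hφ hb0).trans_eq hb
  have hsign := hφ.mul_sub_nonneg_of_eq_zero hb s
  rcases le_total 0 s with hs | hs
  · calc b * φ 0 ≤ b * φ s := mul_le_mul_of_nonneg_left (hφ hs) hb0
      _ ≤ φ s * s := by linarith
  · have hφs : φ s ≤ 0 := (hφ hs).trans hφ0
    calc b * φ 0 ≤ 0 := mul_nonpos_of_nonneg_of_nonpos hb0 hφ0
      _ ≤ φ s * s := mul_nonneg_of_nonpos_of_nonpos hφs hs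

theorem Monotone.neg_mul_le_apply_mul_self {φ : ℝ → ℝ} (hφ : Monotone φ) {b A : ℝ}
    (hb : φ b = 0) (hb0 : 0 ≤ b) (hA : |φ 0| ≤ A) (s : ℝ) : -b * A ≤ φ s * s :=
  calc -b * A ≤ b * φ 0 := by nlinarith [neg_abs_le (φ 0)]
    _ ≤ φ s * s := hφ.mul_apply_zero_le_apply_mul_self hb hb0 s

section Integral

variable {α : Type*} [MeasurableSpace α] {μ : Measure α}

/-- Unlike `integral_mono_ae`, `f` need not be integrable: otherwise `∫ f = 0 ≥ ∫ g`. -/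
theorem integral_le_integral_of_nonpos_of_le {f g : α → ℝ} (hg : Integrable g μ)
    (hg0 : g ≤ᵐ[μ] 0) (hgf : g ≤ᵐ[μ] f) : ∫ x, g x ∂μ ≤ ∫ x, f x ∂μ := by
  by_cases hf : Integrable f μ
  · exact integral_mono_ae hg hf hgf
  · rw [integral_undef hf]
    exact integral_nonpos_of_ae hg0

theorem integral_le_measureReal_univ_rpow_mul_of_nonneg [IsFiniteMeasure μ] {p q : ℝ}
    (hpq : p.HolderConjugate q) {f : α → ℝ} (hf0 : 0 ≤ᵐ[μ] f) (hf : MemLp f (ENNReal.ofReal q) μ) :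
    ∫ x, f x ∂μ ≤ μ.real Set.univ ^ (1 / p) * (∫ x, f x ^ q ∂μ) ^ (1 / q) := by
  simpa using integral_mul_le_Lp_mul_Lq_of_nonneg hpq
    (Filter.Eventually.of_forall fun _ => zero_le_one) hf0 (memLp_const 1) hf

end Integral

theorem boundary_operator_coercivity_estimate_general
    {Γ₃ : Type*} [MeasurableSpace Γ₃] (σ : Measure Γ₃) [IsFiniteMeasure σ]
    (p p' b : ℝ) (hp : 1 < p) (hp' : p' = p / (p - 1)) (hb : 0 < b)
    (l : Γ₃ → ℝ → ℝ) (a_l : Γ₃ → ℝ) (b_l : ℝ)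
    (ha_l : 0 ≤ a_l) (ha_lLp : MemLp a_l (ENNReal.ofReal p') σ)
    (hl_growth : ∀ᵐ x ∂σ, ∀ s : ℝ, |l x s| ≤ a_l x + b_l * (1 + |s| ^ (p - 1)))
    (hl_mono : ∀ᵐ x ∂σ, Monotone fun s => l x s)
    (hl_b : ∀ᵐ x ∂σ, l x b = 0) :
    ∀ ε : ℝ, 0 < ε → ∃ c : ℝ, 0 < c ∧
      ∀ u : Γ₃ → ℝ, MemLp u (ENNReal.ofReal p) σ →
        -b * (σ Set.univ).toReal ^ (1 / p) * (∫ x, (a_l x) ^ p' ∂σ) ^ (1 / p')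
          - b_l * b * (σ Set.univ).toReal - ε * (∫ x, |u x| ^ p ∂σ) - c ≤
        ∫ x, l x (u x) * u x ∂σ := by
  intro ε hε
  refine ⟨1, one_pos, fun u _ => ?_⟩
  have hpq : p.HolderConjugate p' := hp' ▸ Real.HolderConjugate.conjExponent hp
  have ha_int : Integrable a_l σ :=
    ha_lLp.integrable (by simpa using hpq.symm.lt.le)
  have hl_zero : ∀ᵐ x ∂σ, |l x 0| ≤ a_l x + b_l := by
    filter_upwards [hl_growth] with x hx
    simpa [Real.zero_rpow (by linarith : p - 1 ≠ 0)] using hx 0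
  have hpointwise : (fun x => -b * (a_l x + b_l)) ≤ᵐ[σ] fun x => l x (u x) * u x := by
    filter_upwards [hl_zero, hl_mono, hl_b] with x hx hmono hxb
    exact hmono.neg_mul_le_apply_mul_self hxb hb.le hx (u x)
  have hbound_nonpos : (fun x => -b * (a_l x + b_l)) ≤ᵐ[σ] 0 := by
    filter_upwards [hl_zero] with x hx
    have : 0 ≤ a_l x + b_l := (abs_nonneg _).trans hx
    simpa using mul_nonpos_of_nonpos_of_nonneg (neg_nonpos.2 hb.le) this
  have hbound_int : Integrable (fun x => -b * (a_l x + b_l)) σ :=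
    (ha_int.add (integrable_const b_l)).const_mul (-b)
  have hbound_integral :
      ∫ x, -b * (a_l x + b_l) ∂σ = -b * (∫ x, a_l x ∂σ) - b_l * b * σ.real Set.univ := by
    rw [integral_const_mul, integral_add ha_int (integrable_const b_l), integral_const, smul_eq_mul]
    ring
  have hholder := integral_le_measureReal_univ_rpow_mul_of_nonneg hpq
    (Filter.Eventually.of_forall ha_l) ha_lLp
  have hεu : 0 ≤ ε * ∫ x, |u x| ^ p ∂σ :=
    mul_nonneg hε.le (integral_nonneg fun x => Real.rpow_nonneg (abs_nonneg _) _)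
  have hintegral := integral_le_integral_of_nonpos_of_le hbound_int hbound_nonpos hpointwise
  rw [hbound_integral] at hintegral
  rw [← measureReal_def]
  nlinarith [mul_le_mul_of_nonneg_left hholder hb.le]

/-- Coercivity estimate: under H(l), for every `ε > 0` there exists `c(ε) > 0` such that
`⟨L u, u⟩ = ∫_{Γ₃} l(x,u(x)) u(x) dΓ ≥ -b |Γ₃|^{1/p} ‖a_l‖_{p'} - b_l b |Γ₃| - ε ‖u‖_p^p - c(ε)`
for all `u ∈ L^p(Γ₃)`. -/
theorem boundary_operator_coercivity_estimate
    {Γ₃ : Type*} [MeasurableSpace Γ₃] (σ : Measure Γ₃) [IsFiniteMeasure σ]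
    (p p' b : ℝ) (hp : 1 < p) (hp' : p' = p / (p - 1)) (hb : 0 < b)
    (l : Γ₃ → ℝ → ℝ) (a_l : Γ₃ → ℝ) (b_l : ℝ)
    (hl_meas : ∀ s : ℝ, Measurable fun x => l x s)
    (hl_cont : ∀ᵐ x ∂σ, Continuous fun s => l x s)
    (ha_l : 0 ≤ a_l) (ha_lLp : MemLp a_l (ENNReal.ofReal p') σ) (hb_l : 0 < b_l)
    (hl_growth : ∀ᵐ x ∂σ, ∀ s : ℝ, |l x s| ≤ a_l x + b_l * (1 + |s| ^ (p - 1)))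
    (hl_mono : ∀ᵐ x ∂σ, Monotone fun s => l x s)
    (hl_b : ∀ᵐ x ∂σ, l x b = 0) :
    ∀ ε : ℝ, 0 < ε → ∃ c : ℝ, 0 < c ∧
      ∀ u : Γ₃ → ℝ, MemLp u (ENNReal.ofReal p) σ →
        -b * (σ Set.univ).toReal ^ (1 / p) * (∫ x, (a_l x) ^ p' ∂σ) ^ (1 / p')
          - b_l * b * (σ Set.univ).toReal - ε * (∫ x, |u x| ^ p ∂σ) - c ≤
        ∫ x, l x (u x) * u x ∂σ :=
  boundary_operator_coercivity_estimate_general σ p p' b hp hp' hb l a_l b_l ha_l ha_lLp hl_growth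
    hl_mono hl_b
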